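/- Suppose F, H, B : ℝ → Matrix (Fin 2) (Fin 2) ℝ are differentiable and satisfy for all t: F'(t) = 2H(t), H'(t) = 2λ(t)²·F(t) − 2H(t) − μ(t)·B(t), B'(t) = μ(t)·H(t) − 2B(t), with F(0) = M₂, H(0) = −M₃, B(0) = M₁. Then for every t ∈ ℝ the anticommutation relations hold: H(t)F(t) = −F(t)H(t), B(t)F(t) = −F(t)B(t), and B(t)H(t) = −H(t)B(t). -/

import Mathlib

open Matrix

/-- `M₁ = !![1, 0; 0, -1]` -/
def M1 : Matrix (Fin 2) (Fin 2) ℝ := !![1, 0; 0, -1]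
/-- `M₂ = !![0, 1; -1, 0]` -/
def M2 : Matrix (Fin 2) (Fin 2) ℝ := !![0, 1; -1, 0]
/-- `M₃ = !![0, 1; 1, 0]` -/
def M3 : Matrix (Fin 2) (Fin 2) ℝ := !![0, 1; 1, 0]

/-- The function `λ(t) = e^(-2t)`. -/
noncomputable def lam (t : ℝ) : ℝ := Real.exp (-2 * t)

/-!
The three anticommutators `{H, F}`, `{B, F}`, `{B, H}` together with `F² + 1`, `H² - λ²`,
`B² - λ²` satisfy a closed homogeneous linear system of ODEs with continuous coefficients
(closing it uses `(λ²)' = -4λ²`), and all six vanish at `t = 0` for the given initial data.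
Uniqueness of solutions of linear ODEs then makes them vanish identically.
-/

open Set

theorem eq_zero_of_hasDerivAt_clm_apply {E : Type*} [NormedAddCommGroup E] [NormedSpace ℝ E]
    {A : ℝ → E →L[ℝ] E} (hA : Continuous A) {f : ℝ → E}
    (hf : ∀ t, HasDerivAt f (A t (f t)) t) {t₀ : ℝ} (h₀ : f t₀ = 0) (t : ℝ) :
    f t = 0 := by
  set a := min t t₀ - 1 with ha
  set b := max t t₀ + 1 with hb
  obtain ⟨C, hC⟩ := (isCompact_Icc (a := a) (b := b)).exists_bound_of_continuousOn hA.continuousOn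
  have hlip : ∀ s ∈ Ioo a b, LipschitzOnWith C.toNNReal (A s) univ := fun s hs =>
    ((A s).lipschitz.weaken <|
      NNReal.le_toNNReal_of_coe_le <| hC s <| Ioo_subset_Icc_self hs).lipschitzOnWith
  have hmem : ∀ {s}, min t t₀ ≤ s → s ≤ max t t₀ → s ∈ Ioo a b := fun h₁ h₂ =>
    ⟨by linarith, by linarith⟩
  exact ODE_solution_unique_of_mem_Ioo (g := 0) hlip (hmem (min_le_right _ _) (le_max_right _ _))
    (fun s _ => ⟨hf s, mem_univ _⟩) (fun s _ => ⟨by simp, mem_univ _⟩) h₀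
    (hmem (min_le_left _ _) (le_max_left _ _))

theorem Matrix.eq_zero_of_hasDerivAt_mulVec {ι : Type*} [Fintype ι]
    {a : ℝ → Matrix ι ι ℝ} (ha : Continuous a) {x : ℝ → ι → ℝ}
    (hx : ∀ t, HasDerivAt x (a t *ᵥ x t) t) {t₀ : ℝ} (h₀ : x t₀ = 0) (t : ℝ) :
    x t = 0 := by
  classical
  exact eq_zero_of_hasDerivAt_clm_apply
    ((LinearMap.continuous_of_finiteDimensional
      (LinearMap.toContinuousLinearMap.toLinearMap ∘ₗ Matrix.toLin'.toLinearMap)).comp ha)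
    hx h₀ t

/-- Matrices carry no global norm in Mathlib, so matrix-valued curves are differentiated
entrywise. -/
def HasEntrywiseDerivAt {m n : Type*} (A : ℝ → Matrix m n ℝ) (A' : Matrix m n ℝ) (t : ℝ) :
    Prop :=
  ∀ i j, HasDerivAt (fun s => A s i j) (A' i j) t

namespace HasEntrywiseDerivAt

variable {l m n : Type*} {A B : ℝ → Matrix m n ℝ} {A' B' : Matrix m n ℝ} {t : ℝ}

theorem const (C : Matrix m n ℝ) (t : ℝ) : HasEntrywiseDerivAt (fun _ => C) 0 t :=
  fun _ _ => hasDerivAt_const t _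

theorem congr_deriv (hA : HasEntrywiseDerivAt A A' t) (h : A' = B') :
    HasEntrywiseDerivAt A B' t :=
  h ▸ hA

theorem add (hA : HasEntrywiseDerivAt A A' t) (hB : HasEntrywiseDerivAt B B' t) :
    HasEntrywiseDerivAt (fun s => A s + B s) (A' + B') t :=
  fun i j => (hA i j).add (hB i j)

theorem sub (hA : HasEntrywiseDerivAt A A' t) (hB : HasEntrywiseDerivAt B B' t) :
    HasEntrywiseDerivAt (fun s => A s - B s) (A' - B') t :=
  fun i j => (hA i j).sub (hB i j)

theorem smul {c : ℝ → ℝ} {c' : ℝ} (hc : HasDerivAt c c' t)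
    (hA : HasEntrywiseDerivAt A A' t) :
    HasEntrywiseDerivAt (fun s => c s • A s) (c' • A t + c t • A') t := by
  intro i j
  simpa [mul_comm] using hc.fun_mul (hA i j)

theorem mul [Fintype m] {A : ℝ → Matrix l m ℝ} {A' : Matrix l m ℝ}
    {B : ℝ → Matrix m n ℝ} {B' : Matrix m n ℝ}
    (hA : HasEntrywiseDerivAt A A' t) (hB : HasEntrywiseDerivAt B B' t) :
    HasEntrywiseDerivAt (fun s => A s * B s) (A' * B t + A t * B') t := by
  intro i j
  simpa [Matrix.mul_apply, Finset.sum_add_distrib] using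
    HasDerivAt.fun_sum fun k _ => (hA i k).mul (hB k j)

end HasEntrywiseDerivAt

theorem eq_zero_of_hasEntrywiseDerivAt_sum_smul {ι m n : Type*} [Fintype ι]
    {a : ℝ → Matrix ι ι ℝ} (ha : Continuous a) {X : ℝ → ι → Matrix m n ℝ}
    (hX : ∀ t k, HasEntrywiseDerivAt (fun s => X s k) (∑ l, a t k l • X t l) t)
    {t₀ : ℝ} (h₀ : X t₀ = 0) (t : ℝ) : X t = 0 := by
  ext k i j
  have hx : ∀ s, HasDerivAt (fun s k => X s k i j) (a s *ᵥ fun l => X s l i j) s := fun s =>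
    hasDerivAt_pi.2 fun k => by
      simpa [mulVec, dotProduct, Matrix.sum_apply] using hX s k i j
  have hx₀ : (fun l => X t₀ l i j) = 0 := funext fun l => by simp [h₀]
  simpa using congrFun (Matrix.eq_zero_of_hasDerivAt_mulVec ha hx hx₀ t) k

theorem hasDerivAt_lam (t : ℝ) : HasDerivAt lam (-2 * lam t) t := by
  show HasDerivAt (fun s => Real.exp (-2 * s)) (-2 * Real.exp (-2 * t)) t
  simpa [mul_comm] using ((hasDerivAt_id t).const_mul (-2)).exp

theorem hasDerivAt_lam_sq (t : ℝ) : HasDerivAt (fun s => lam s ^ 2) (-4 * lam t ^ 2) t :=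
  ((hasDerivAt_lam t).fun_pow 2).congr_deriv (by push_cast; ring)

noncomputable def defect (F H B : ℝ → Matrix (Fin 2) (Fin 2) ℝ) (t : ℝ) :
    Fin 6 → Matrix (Fin 2) (Fin 2) ℝ :=
  ![H t * F t + F t * H t, B t * F t + F t * B t, B t * H t + H t * B t,
    F t * F t + 1, H t * H t - lam t ^ 2 • 1, B t * B t - lam t ^ 2 • 1]

noncomputable def defectCoeff (μ : ℝ → ℝ) (t : ℝ) : Matrix (Fin 6) (Fin 6) ℝ :=
  !![-2, -μ t, 0, 4 * lam t ^ 2, 4, 0;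
     μ t, -2, 2, 0, 0, 0;
     0, 2 * lam t ^ 2, -4, 0, 2 * μ t, -2 * μ t;
     2, 0, 0, 0, 0, 0;
     2 * lam t ^ 2, 0, -μ t, 0, -4, 0;
     0, 0, μ t, 0, 0, -4]

theorem continuous_defectCoeff {μ : ℝ → ℝ} (hμ : Continuous μ) :
    Continuous (defectCoeff μ) := by
  unfold defectCoeff lam
  fun_prop

theorem defect_zero {F H B : ℝ → Matrix (Fin 2) (Fin 2) ℝ}
    (hF0 : F 0 = M2) (hH0 : H 0 = -M3) (hB0 : B 0 = M1) : defect F H B 0 = 0 := by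
  ext n : 1
  fin_cases n <;>
    simp [defect, hF0, hH0, hB0, M1, M2, M3, lam, Matrix.one_fin_two, ← Matrix.ext_iff,
      Fin.forall_fin_two]

theorem hasEntrywiseDerivAt_defect {μ : ℝ → ℝ} {F H B : ℝ → Matrix (Fin 2) (Fin 2) ℝ}
    {t : ℝ}
    (hF : HasEntrywiseDerivAt F ((2 : ℝ) • H t) t)
    (hH : HasEntrywiseDerivAt H ((2 * lam t ^ 2) • F t - (2 : ℝ) • H t - μ t • B t) t)
    (hB : HasEntrywiseDerivAt B (μ t • H t - (2 : ℝ) • B t) t) (n : Fin 6) :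
    HasEntrywiseDerivAt (fun s => defect F H B s n)
      (∑ k, defectCoeff μ t n k • defect F H B t k) t := by
  have hlam := (HasEntrywiseDerivAt.const (1 : Matrix (Fin 2) (Fin 2) ℝ) t).smul
    (hasDerivAt_lam_sq t)
  fin_cases n <;>
    [refine ((hH.mul hF).add (hF.mul hH)).congr_deriv ?_;
     refine ((hB.mul hF).add (hF.mul hB)).congr_deriv ?_;
     refine ((hB.mul hH).add (hH.mul hB)).congr_deriv ?_;
     refine ((hF.mul hF).add (.const 1 t)).congr_deriv ?_;
     refine ((hH.mul hH).sub hlam).congr_deriv ?_;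
     refine ((hB.mul hB).sub hlam).congr_deriv ?_] <;>
  · simp only [Fin.sum_univ_six, defect, defectCoeff, Fin.zero_eta, Fin.mk_one, Fin.reduceFinMk,
      Fin.isValue, of_apply, cons_val', cons_val_fin_one, cons_val_zero, cons_val_one, cons_val,
      mul_sub, sub_mul, smul_mul_assoc, mul_smul_comm]
    module

theorem stmt_3 (μ : ℝ → ℝ) (hμ : Continuous μ)
    (F H B : ℝ → Matrix (Fin 2) (Fin 2) ℝ)
    (hF : ∀ t i j, HasDerivAt (fun s => F s i j) (((2 : ℝ) • H t) i j) t)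
    (hH : ∀ t i j, HasDerivAt (fun s => H s i j)
      (((2 * (lam t) ^ 2) • F t - (2 : ℝ) • H t - μ t • B t) i j) t)
    (hB : ∀ t i j, HasDerivAt (fun s => B s i j)
      ((μ t • H t - (2 : ℝ) • B t) i j) t)
    (hF0 : F 0 = M2) (hH0 : H 0 = -M3) (hB0 : B 0 = M1) :
    ∀ t : ℝ, H t * F t = -(F t * H t) ∧ B t * F t = -(F t * B t) ∧ B t * H t = -(H t * B t) := by
  intro t
  have hdefect : defect F H B t = 0 :=
    eq_zero_of_hasEntrywiseDerivAt_sum_smul (continuous_defectCoeff hμ)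
      (fun s => hasEntrywiseDerivAt_defect (hF s) (hH s) (hB s)) (defect_zero hF0 hH0 hB0) t
  simp only [← add_eq_zero_iff_eq_neg]
  exact ⟨congrFun hdefect 0, congrFun hdefect 1, congrFun hdefect 2⟩
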